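/- Let Φ(v) = Σ_i (exp(λ(v_i−1)) + exp(−λ(v_i−1))) with λ > 0, let τ ∈ ℝ^n_{>0}, and define v^♭ := argmax_{‖w‖_{τ+∞} ≤ 1} ⟨v, w⟩ and ‖v‖_* := max_{‖w‖_{τ+∞} ≤ 1} ⟨v, w⟩ for the mixed norm ‖w‖_{τ+∞} = ‖w‖_∞ + C‖w‖_τ (C > 0). Then for all v, w ∈ ℝ^n with ‖v − w‖_∞ ≤ δ ≤ 1/(5λ): e^{-λδ}‖∇Φ(w)‖_* − λn ≤ ⟨∇Φ(v), ∇Φ(w)^♭⟩ ≤ e^{λδ}‖∇Φ(w)‖_* + λe^{λδ}n. -/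
import Mathlib


/-- The gradient of the soft-max potential: `∇Φ(v)ᵢ = λ(e^{λ(vᵢ-1)} − e^{-λ(vᵢ-1)})`. -/
noncomputable def gradPhi {n : ℕ} (lam : ℝ) (v : Fin n → ℝ) : Fin n → ℝ := fun i =>
  lam * (Real.exp (lam * (v i - 1)) - Real.exp (-(lam * (v i - 1))))

/-- The dual norm of the mixed norm `‖w‖_{τ+∞} = ‖w‖_∞ + C‖w‖_τ`. -/
noncomputable def dualNorm (n : ℕ) (τ : Fin n → ℝ) (C : ℝ) (u : Fin n → ℝ) : ℝ :=
  sSup {y | ∃ w : Fin n → ℝ,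
    ‖w‖ + C * Real.sqrt (∑ i, τ i * w i ^ 2) ≤ 1 ∧ y = ∑ i, u i * w i}

open Real in
lemma key19 (s x y c : ℝ) (hs : 0 ≤ s) (hs1 : Real.exp s - Real.exp (-s) ≤ 1)
    (hxy : |x - y| ≤ s) (hc : |c| ≤ 1)
    (hsign : 0 ≤ (Real.exp y - Real.exp (-y)) * c) :
    Real.exp (-s) * ((Real.exp y - Real.exp (-y)) * c) - 1 ≤ (Real.exp x - Real.exp (-x)) * c ∧
      (Real.exp x - Real.exp (-x)) * c ≤
        Real.exp s * ((Real.exp y - Real.exp (-y)) * c) + Real.exp s := by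
  obtain ⟨h1, h2⟩ := abs_le.mp hxy
  obtain ⟨hc1, hc2⟩ := abs_le.mp hc
  have hA : Real.exp x ≤ Real.exp s * Real.exp y := by
    rw [← Real.exp_add]; exact Real.exp_le_exp.mpr (by linarith)
  have hA' : Real.exp (-s) * Real.exp y ≤ Real.exp x := by
    rw [← Real.exp_add]; exact Real.exp_le_exp.mpr (by linarith)
  have hB : Real.exp (-x) ≤ Real.exp s * Real.exp (-y) := by
    rw [← Real.exp_add]; exact Real.exp_le_exp.mpr (by linarith)
  have hB' : Real.exp (-s) * Real.exp (-y) ≤ Real.exp (-x) := by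
    rw [← Real.exp_add]; exact Real.exp_le_exp.mpr (by linarith)
  have hyy : Real.exp y * Real.exp (-y) = 1 := by rw [← Real.exp_add]; simp
  have hss : Real.exp s * Real.exp (-s) = 1 := by rw [← Real.exp_add]; simp
  have hE1 : 1 ≤ Real.exp s := Real.one_le_exp hs
  have hE0 : 0 < Real.exp (-s) := Real.exp_pos _
  have hE0' : Real.exp (-s) ≤ 1 := by nlinarith
  have hy0 : 0 < Real.exp y := Real.exp_pos _
  have hy0' : 0 < Real.exp (-y) := Real.exp_pos _
  rcases lt_trichotomy c 0 with hcneg | hc0 | hcpos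
  · -- c < 0 : exp y - exp(-y) ≤ 0, so exp y ≤ 1
    have hby : Real.exp y - Real.exp (-y) ≤ 0 := by nlinarith
    have hBle : Real.exp y ≤ 1 := by nlinarith
    have h3 : Real.exp y * (-c) ≤ 1 := by nlinarith
    have h4 : (Real.exp s - Real.exp (-s)) * (Real.exp y * (-c)) ≤
        (Real.exp s - Real.exp (-s)) * 1 :=
      mul_le_mul_of_nonneg_left h3 (by nlinarith)
    have hd : Real.exp x - Real.exp (-x) ≤ Real.exp s * Real.exp y - Real.exp (-s) * Real.exp (-y) := by
      linarith
    have hd2 : Real.exp (-s) * Real.exp y - Real.exp s * Real.exp (-y) ≤ Real.exp x - Real.exp (-x) := by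
      linarith
    have hu := mul_le_mul_of_nonpos_right hd2 hcneg.le
    have hl := mul_le_mul_of_nonpos_right hd hcneg.le
    constructor
    · linarith
    · linarith
  · subst hc0
    constructor
    · simp
    · simp; positivity
  · have hby : 0 ≤ Real.exp y - Real.exp (-y) := by nlinarith
    have hBle : Real.exp (-y) ≤ 1 := by nlinarith
    have h3 : Real.exp (-y) * c ≤ 1 := by nlinarith
    have h4 : (Real.exp s - Real.exp (-s)) * (Real.exp (-y) * c) ≤
        (Real.exp s - Real.exp (-s)) * 1 :=
      mul_le_mul_of_nonneg_left h3 (by nlinarith)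
    have hd : Real.exp x - Real.exp (-x) ≤ Real.exp s * Real.exp y - Real.exp (-s) * Real.exp (-y) := by
      linarith
    have hd2 : Real.exp (-s) * Real.exp y - Real.exp s * Real.exp (-y) ≤ Real.exp x - Real.exp (-x) := by
      linarith
    have hu := mul_le_mul_of_nonneg_right hd hcpos.le
    have hl := mul_le_mul_of_nonneg_right hd2 hcpos.le
    constructor
    · linarith
    · linarith

/-- Smoothing property: for `‖v − w‖_∞ ≤ δ ≤ 1/(5λ)` and any maximizer `g = ∇Φ(w)^♭` in the
mixed-norm unit ball,
`e^{-λδ}‖∇Φ(w)‖_* − λn ≤ ⟨∇Φ(v), g⟩ ≤ e^{λδ}‖∇Φ(w)‖_* + λe^{λδ}n`. -/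
theorem stmt19 (n : ℕ) (τ : Fin n → ℝ) (hτ : ∀ i, 0 < τ i) (C : ℝ) (hC : 0 < C)
    (lam δ : ℝ) (hlam : 0 < lam) (hδ : δ ≤ 1 / (5 * lam))
    (v w : Fin n → ℝ) (hvw : ‖v - w‖ ≤ δ)
    (g : Fin n → ℝ)
    (hg1 : ‖g‖ + C * Real.sqrt (∑ i, τ i * g i ^ 2) ≤ 1)
    (hg2 : ∑ i, gradPhi lam w i * g i = dualNorm n τ C (gradPhi lam w)) :
    Real.exp (-(lam * δ)) * dualNorm n τ C (gradPhi lam w) - lam * n ≤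
        ∑ i, gradPhi lam v i * g i ∧
      ∑ i, gradPhi lam v i * g i ≤
        Real.exp (lam * δ) * dualNorm n τ C (gradPhi lam w) +
          lam * Real.exp (lam * δ) * n := by
  set u := gradPhi lam w with hu
  set S : Set ℝ := {y | ∃ w' : Fin n → ℝ,
    ‖w'‖ + C * Real.sqrt (∑ i, τ i * w' i ^ 2) ≤ 1 ∧ y = ∑ i, u i * w' i} with hS
  have hδ0 : 0 ≤ δ := le_trans (norm_nonneg _) hvw
  -- boundedness of S
  have hbdd : BddAbove S := by
    refine ⟨∑ i, |u i|, ?_⟩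
    rintro y ⟨w', hw', rfl⟩
    have hw'1 : ‖w'‖ ≤ 1 := by
      have : 0 ≤ C * Real.sqrt (∑ i, τ i * w' i ^ 2) :=
        mul_nonneg hC.le (Real.sqrt_nonneg _)
      linarith
    refine Finset.sum_le_sum fun i _ => ?_
    have h1 : |w' i| ≤ 1 := by
      have := norm_le_pi_norm w' i
      rw [Real.norm_eq_abs] at this
      linarith
    calc u i * w' i ≤ |u i * w' i| := le_abs_self _
      _ = |u i| * |w' i| := abs_mul _ _
      _ ≤ |u i| * 1 := mul_le_mul_of_nonneg_left h1 (abs_nonneg _)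
      _ = |u i| := mul_one _
  have hub : ∀ y ∈ S, y ≤ dualNorm n τ C u := fun y hy => le_csSup hbdd hy
  -- sign alignment of the maximizer
  have hsign : ∀ i, 0 ≤ u i * g i := by
    by_contra hcon
    push_neg at hcon
    obtain ⟨j, hj⟩ := hcon
    set g' := Function.update g j (-(g j)) with hg'
    have hfeas : ‖g'‖ + C * Real.sqrt (∑ i, τ i * g' i ^ 2) ≤ 1 := by
      have hn : ‖g'‖ ≤ ‖g‖ := by
        refine (pi_norm_le_iff_of_nonneg (norm_nonneg g)).mpr fun i => ?_
        by_cases hij : i = j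
        · subst hij
          simp only [hg', Function.update_self, norm_neg]
          exact norm_le_pi_norm g i
        · simp only [hg', Function.update_of_ne hij]
          exact norm_le_pi_norm g i
      have hsq : (∑ i, τ i * g' i ^ 2) = ∑ i, τ i * g i ^ 2 := by
        refine Finset.sum_congr rfl fun i _ => ?_
        by_cases hij : i = j
        · subst hij; simp [hg']
        · simp [hg', Function.update_of_ne hij]
      rw [hsq]; linarith
    have hmem : (∑ i, u i * g' i) ∈ S := ⟨g', hfeas, rfl⟩
    have hsum : ∑ i, u i * g' i = (∑ i, u i * g i) - 2 * (u j * g j) := by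
      have hpt : ∀ i, u i * g' i =
          u i * g i - (if i = j then 2 * (u j * g j) else 0) := by
        intro i
        by_cases hij : i = j
        · subst hij; simp [hg']; ring
        · simp [hg', Function.update_of_ne hij, hij]
      rw [Finset.sum_congr rfl fun i _ => hpt i, Finset.sum_sub_distrib,
        Finset.sum_ite_eq' Finset.univ j (fun _ => 2 * (u j * g j))]
      simp
    have hle := hub _ hmem
    rw [hsum, hg2] at hle
    linarith
  -- |g i| ≤ 1
  have hgle : ∀ i, |g i| ≤ 1 := by
    intro i
    have h0 : 0 ≤ C * Real.sqrt (∑ i, τ i * g i ^ 2) :=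
      mul_nonneg hC.le (Real.sqrt_nonneg _)
    have := norm_le_pi_norm g i
    rw [Real.norm_eq_abs] at this
    linarith
  -- exp s - exp (-s) ≤ 1 for s = lam * δ ≤ 1/5
  have hs5 : lam * δ ≤ 1 / 5 := by
    have h5l : (0:ℝ) < 5 * lam := by positivity
    have h2 : δ * (5 * lam) ≤ 1 := by rwa [← le_div_iff₀ h5l]
    nlinarith
  have hexp15 : Real.exp (1/5) ≤ 1.25 := by
    by_contra hcc
    push_neg at hcc
    have h5 : (1.25:ℝ)^5 < (Real.exp (1/5))^5 :=
      pow_lt_pow_left₀ hcc (by norm_num) (by norm_num)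
    rw [← Real.exp_nat_mul] at h5
    norm_num at h5
    nlinarith [Real.exp_one_lt_d9, h5]
  have hs1 : Real.exp (lam * δ) - Real.exp (-(lam * δ)) ≤ 1 := by
    have hE : Real.exp (lam * δ) ≤ 1.25 :=
      le_trans (Real.exp_le_exp.mpr hs5) hexp15
    have hE' : 0.8 ≤ Real.exp (-(lam * δ)) := by
      have hss : Real.exp (lam * δ) * Real.exp (-(lam * δ)) = 1 := by
        rw [← Real.exp_add]; simp
      nlinarith [Real.exp_pos (-(lam * δ)), Real.exp_pos (lam * δ)]
    linarith
  have hs0 : 0 ≤ lam * δ := mul_nonneg hlam.le hδ0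
  -- per-coordinate bounds
  have hkey : ∀ i, Real.exp (-(lam * δ)) * (u i * g i) - lam ≤ gradPhi lam v i * g i ∧
      gradPhi lam v i * g i ≤ Real.exp (lam * δ) * (u i * g i) + lam * Real.exp (lam * δ) := by
    intro i
    have hxy : |lam * (v i - 1) - lam * (w i - 1)| ≤ lam * δ := by
      have h1 : |v i - w i| ≤ δ := by
        have := norm_le_pi_norm (v - w) i
        rw [Real.norm_eq_abs, Pi.sub_apply] at this
        linarith
      have heq2 : lam * (v i - 1) - lam * (w i - 1) = lam * (v i - w i) := by ring
      rw [heq2, abs_mul, abs_of_pos hlam]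
      exact mul_le_mul_of_nonneg_left h1 hlam.le
    have hsg : 0 ≤ (Real.exp (lam * (w i - 1)) - Real.exp (-(lam * (w i - 1)))) * g i := by
      have hsi := hsign i
      rw [hu] at hsi
      simp only [gradPhi] at hsi
      nlinarith
    obtain ⟨hlo, hhi⟩ := key19 (lam * δ) (lam * (v i - 1)) (lam * (w i - 1)) (g i)
      hs0 hs1 hxy (hgle i) hsg
    have hui : u i * g i = lam * ((Real.exp (lam * (w i - 1)) - Real.exp (-(lam * (w i - 1)))) * g i) := by
      rw [hu]; simp only [gradPhi]; ring
    have hvi : gradPhi lam v i * g i = lam * ((Real.exp (lam * (v i - 1)) - Real.exp (-(lam * (v i - 1)))) * g i) := by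
      simp only [gradPhi]; ring
    rw [hui, hvi]
    constructor
    · nlinarith [hlo, hlam]
    · nlinarith [hhi, hlam]
  constructor
  · have hstep : ∑ i, (Real.exp (-(lam * δ)) * (u i * g i) - lam) ≤ ∑ i, gradPhi lam v i * g i :=
      Finset.sum_le_sum fun i _ => (hkey i).1
    have heq : ∑ i, (Real.exp (-(lam * δ)) * (u i * g i) - lam) =
        Real.exp (-(lam * δ)) * (∑ i, u i * g i) - lam * n := by
      rw [Finset.sum_sub_distrib, ← Finset.mul_sum, Finset.sum_const, Finset.card_univ,
        Fintype.card_fin, nsmul_eq_mul]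
      ring
    rw [heq, hg2] at hstep
    exact hstep
  · have hstep : ∑ i, gradPhi lam v i * g i ≤
        ∑ i, (Real.exp (lam * δ) * (u i * g i) + lam * Real.exp (lam * δ)) :=
      Finset.sum_le_sum fun i _ => (hkey i).2
    have heq : ∑ i, (Real.exp (lam * δ) * (u i * g i) + lam * Real.exp (lam * δ)) =
        Real.exp (lam * δ) * (∑ i, u i * g i) + lam * Real.exp (lam * δ) * n := by
      rw [Finset.sum_add_distrib, ← Finset.mul_sum, Finset.sum_const, Finset.card_univ,
        Fintype.card_fin, nsmul_eq_mul]
      ring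
    rw [heq, hg2] at hstep
    exact hstep
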